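/- arXiv:2302.06351 — 2 statements merged into one kernel-verified Lean document; each statement's English description precedes it below -/
import Mathlib

section
/- Let G=(V,E,π) be a colored graph with equitable coloring π, and let D₁,…,D_t ⊆ V be the vertex sets corresponding to the weakly connected components of the quotient graph Q(G,π), where two color classes are joined in Q iff the bipartite graph between them is neither empty nor complete (i.e., is non-homogeneous). Then Aut(G,π) is isomorphic to the direct product ∏_{i=1}^t Aut((G,π)[D_i]) of the automorphism groups of the induced colored subgraphs, after exhaustively flipping homogeneously-complete connections between components to non-edges. -/
namespace Sassy

/-- A coloring is equitable if vertices of the same color have the same number of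
neighbors in every color class. -/
def Equitable {V C : Type*} (G : SimpleGraph V) (π : V → C) : Prop :=
  ∀ v w, π v = π w → ∀ c : C,
    {u | G.Adj v u ∧ π u = c}.ncard = {u | G.Adj w u ∧ π u = c}.ncard

/-- `φ` is a color-preserving automorphism of the colored graph `(G, π)`. -/
def IsAut {V C : Type*} (G : SimpleGraph V) (π : V → C) (φ : Equiv.Perm V) : Prop :=
  (∀ v w, G.Adj (φ v) (φ w) ↔ G.Adj v w) ∧ ∀ v, π (φ v) = π v

/-- The automorphism group of a colored graph, as a subgroup of `Equiv.Perm V`. -/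
def Aut {V C : Type*} (G : SimpleGraph V) (π : V → C) : Subgroup (Equiv.Perm V) where
  carrier := {φ | IsAut G π φ}
  one_mem' := ⟨fun _ _ => Iff.rfl, fun _ => rfl⟩
  mul_mem' := by
    rintro a b ⟨ha1, ha2⟩ ⟨hb1, hb2⟩
    refine ⟨fun v w => ?_, fun v => ?_⟩
    · simpa [Equiv.Perm.mul_apply] using (ha1 (b v) (b w)).trans (hb1 v w)
    · simp [Equiv.Perm.mul_apply, ha2, hb2]
  inv_mem' := by
    rintro a ⟨ha1, ha2⟩
    refine ⟨fun v w => ?_, fun v => ?_⟩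
    · conv_rhs => rw [← (show a (a⁻¹ v) = v from Equiv.apply_symm_apply a v), ← (show a (a⁻¹ w) = w from Equiv.apply_symm_apply a w)]
      exact (ha1 _ _).symm
    · conv_rhs => rw [← (show a (a⁻¹ v) = v from Equiv.apply_symm_apply a v)]
      exact (ha2 _).symm

end Sassy

/-!
Automorphisms preserve colors, so they map every union of color classes onto itself and restrict
to color-preserving automorphisms of the induced subgraphs. Conversely, automorphisms of the
parts glue to a permutation of `V`; it is an automorphism of `G` because adjacency inside a part
is preserved by that part's automorphism, while there are no edges between different parts
before or after applying it.
-/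

namespace Equiv.Perm

variable {V ι : Type*}

noncomputable def glue (D : ι → Set V) (hD : ∀ v, ∃! i, v ∈ D i) (σ : ∀ i, Perm (D i)) :
    Perm V :=
  (Set.sigmaEquiv D hD).permCongr (Equiv.sigmaCongrRight σ)

theorem glue_apply (D : ι → Set V) (hD : ∀ v, ∃! i, v ∈ D i) (σ : ∀ i, Perm (D i))
    (i : ι) (v : D i) : glue D hD σ v = (σ i v).1 := by
  have : (Set.sigmaEquiv D hD).symm v = ⟨i, v⟩ := (Equiv.symm_apply_eq _).2 rfl
  simp only [glue, permCongr_apply, this]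
  rfl

end Equiv.Perm

namespace Sassy

variable {V C ι : Type*} {G : SimpleGraph V} {π : V → C}

def Aut.restrict (S : Set V) (hS : ∀ v w, π v = π w → (v ∈ S ↔ w ∈ S)) :
    Aut G π →* Aut (G.induce S) (fun v => π v.1) where
  toFun φ := ⟨φ.1.subtypePerm fun v => hS _ _ (φ.2.2 v), fun a b => φ.2.1 a b, fun v => φ.2.2 v⟩
  map_one' := rfl
  map_mul' _ _ := rfl

theorem Aut.restrict_apply_coe (S : Set V) (hS : ∀ v w, π v = π w → (v ∈ S ↔ w ∈ S))
    (φ : Aut G π) (v : S) : ((Aut.restrict S hS φ).1 v).1 = φ.1 v.1 :=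
  rfl

theorem Aut.pi_restrict_injective (D : ι → Set V) (hcover : ∀ v, ∃ i, v ∈ D i)
    (hD : ∀ i, ∀ v w, π v = π w → (v ∈ D i ↔ w ∈ D i)) :
    Function.Injective (MonoidHom.pi fun i => Aut.restrict (G := G) (D i) (hD i)) := by
  intro φ ψ h
  refine Subtype.ext (Equiv.ext fun v => ?_)
  obtain ⟨i, hv⟩ := hcover v
  exact congrArg (fun χ => (χ.1 ⟨v, hv⟩ : V)) (congrFun h i)

theorem glue_mem_aut (D : ι → Set V) (hD : ∀ v, ∃! i, v ∈ D i)
    (hcross : ∀ i j, i ≠ j → ∀ u ∈ D i, ∀ v ∈ D j, ¬ G.Adj u v)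
    (ψ : ∀ i, Aut (G.induce (D i)) (fun v => π v.1)) :
    Equiv.Perm.glue D hD (fun i => (ψ i).1) ∈ Aut G π := by
  have hglue : ∀ i (v : D i), Equiv.Perm.glue D hD (fun i => (ψ i).1) v = ((ψ i).1 v).1 :=
    Equiv.Perm.glue_apply D hD _
  refine ⟨fun v w => ?_, fun v => ?_⟩
  · obtain ⟨i, hv, -⟩ := hD v
    obtain ⟨j, hw, -⟩ := hD w
    rw [hglue i ⟨v, hv⟩, hglue j ⟨w, hw⟩]
    by_cases hij : i = j
    · subst hij
      exact (ψ i).2.1 ⟨v, hv⟩ ⟨w, hw⟩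
    · exact iff_of_false (hcross i j hij _ ((ψ i).1 _).2 _ ((ψ j).1 _).2)
        (hcross i j hij v hv w hw)
  · obtain ⟨i, hv, -⟩ := hD v
    rw [hglue i ⟨v, hv⟩]
    exact (ψ i).2.2 ⟨v, hv⟩

theorem Aut.pi_restrict_surjective (D : ι → Set V) (hcover : ∀ v, ∃ i, v ∈ D i)
    (hdisj : ∀ i j, i ≠ j → Disjoint (D i) (D j))
    (hclasses : ∀ i, ∀ v w, π v = π w → (v ∈ D i ↔ w ∈ D i))
    (hcross : ∀ i j, i ≠ j → ∀ u ∈ D i, ∀ v ∈ D j, ¬ G.Adj u v) :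
    Function.Surjective (MonoidHom.pi fun i => Aut.restrict (G := G) (D i) (hclasses i)) := by
  have hD : ∀ v, ∃! i, v ∈ D i := fun v =>
    (hcover v).elim fun i hv => ⟨i, hv, fun j hj => by_contra fun hji =>
      Set.disjoint_left.mp (hdisj j i hji) hj hv⟩
  intro ψ
  refine ⟨⟨_, glue_mem_aut D hD hcross ψ⟩, funext fun i => ?_⟩
  exact Subtype.ext (Equiv.ext fun v => Subtype.ext (Equiv.Perm.glue_apply D hD _ i v))

end Sassy

theorem stmt6_general {V C : Type*} (G : SimpleGraph V) (π : V → C)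
    (t : ℕ) (D : Fin t → Set V)
    (hcover : ∀ v, ∃ i, v ∈ D i)
    (hdisj : ∀ i j, i ≠ j → Disjoint (D i) (D j))
    (hclasses : ∀ i, ∀ v w, π v = π w → (v ∈ D i ↔ w ∈ D i))
    (hcross : ∀ i j, i ≠ j → ∀ u ∈ D i, ∀ v ∈ D j, ¬ G.Adj u v) :
    ∃ e : ↥(Sassy.Aut G π) ≃*
        ((i : Fin t) → ↥(Sassy.Aut (G.induce (D i)) (fun v => π v.1))),
      ∀ (φ : ↥(Sassy.Aut G π)) (i : Fin t) (v : ↥(D i)),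
        ((e φ i).1 v).1 = φ.1 v.1 :=
  ⟨MulEquiv.ofBijective _ ⟨Sassy.Aut.pi_restrict_injective D hcover hclasses,
      Sassy.Aut.pi_restrict_surjective D hcover hdisj hclasses hcross⟩,
    fun φ i v => Sassy.Aut.restrict_apply_coe (D i) (hclasses i) φ v⟩

/-- If D₁,…,D_t partition V into unions of color classes with no
edges between distinct parts (after flipping homogeneously-complete
connections to non-edges), then Aut(G,π) is isomorphic to the direct product
of the automorphism groups of the induced colored subgraphs, via restriction. -/
theorem stmt6 {V C : Type*} [Fintype V] (G : SimpleGraph V) (π : V → C)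
    (hequit : Sassy.Equitable G π) (t : ℕ) (D : Fin t → Set V)
    (hcover : ∀ v, ∃ i, v ∈ D i)
    (hdisj : ∀ i j, i ≠ j → Disjoint (D i) (D j))
    (hclasses : ∀ i, ∀ v w, π v = π w → (v ∈ D i ↔ w ∈ D i))
    (hcross : ∀ i j, i ≠ j → ∀ u ∈ D i, ∀ v ∈ D j, ¬ G.Adj u v) :
    ∃ e : ↥(Sassy.Aut G π) ≃*
        ((i : Fin t) → ↥(Sassy.Aut (G.induce (D i)) (fun v => π v.1))),
      ∀ (φ : ↥(Sassy.Aut G π)) (i : Fin t) (v : ↥(D i)),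
        ((e φ i).1 v).1 = φ.1 v.1 :=
  stmt6_general G π t D hcover hdisj hclasses hcross
end

section
/- Let G=(V,E,π) be an equitably colored graph and X, Y distinct color classes connected by |X|·|Y| pairwise internally-disjoint paths through degree-2 color classes C₁,…,C_t (an 'obfuscated edge flip'): every vertex of C_i has degree 2 with one neighbor in C_{i-1} and one in C_{i+1} (C₀=X, C_{t+1}=Y), and every x ∈ X has exactly |Y| neighbors in C₁ whose paths end in all distinct y ∈ Y. Let G' be obtained by deleting C₁,…,C_t (and the internal path edges). Then the restriction map Aut(G,π) → Aut(G',π|_{V'}) is a surjective group homomorphism: deleting all these paths is both symmetry preserving and symmetry lifting. -/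
namespace Sassy

/-- A path `(x, c₁, …, c_t, y)` through the color classes `c 0, c 1, …, c (t+1)`,
encoded as a function `w : Fin (t+2) → V`. -/
def IsUPath {V C : Type*} (G : SimpleGraph V) (π : V → C) (c : ℕ → C) (t : ℕ)
    (x : V) (w : Fin (t + 2) → V) : Prop :=
  w ⟨0, by omega⟩ = x ∧ (∀ i : Fin (t + 2), π (w i) = c i.1) ∧
    ∀ i : ℕ, (h : i + 1 < t + 2) → G.Adj (w ⟨i, by omega⟩) (w ⟨i + 1, h⟩)

end Sassy

/-!
Every vertex of an inner class `C_i` has exactly two neighbours, one in `C_{i-1}` and one in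
`C_{i+1}`. Walking up and down from it therefore gives an `X`–`Y` path through it, and two such
paths that share an inner vertex coincide. So the inner vertices are exactly the points
`P_{x,y}(j)`, `1 ≤ j ≤ t`, of the unique connecting paths, each one met once. An automorphism `ψ`
of the reduced graph preserves colours, hence `X` and `Y`, and it lifts by
`P_{x,y}(j) ↦ P_{ψ x, ψ y}(j)`. The lift of `ψ⁻¹` inverts this, and edges go to edges because
every edge at an inner vertex is an edge of its path.
-/

theorem Set.eq_pair_of_ncard_eq_two {α : Type*} {s : Set α} {a b : α} (hs : s.ncard = 2)
    (ha : a ∈ s) (hb : b ∈ s) (hab : a ≠ b) : s = {a, b} :=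
  (Set.eq_of_subset_of_ncard_le (Set.pair_subset ha hb) (by rw [hs, Set.ncard_pair hab])
    (Set.finite_of_ncard_ne_zero (by omega))).symm

namespace Sassy

variable {V C : Type*} {G : SimpleGraph V} {π : V → C} {c : ℕ → C} {t : ℕ}

def restrictAut (G : SimpleGraph V) (π : V → C) (T : Set C) :
    Aut G π →* Aut (G.induce (π ⁻¹' T)) (fun v => π v.1) :=
  MonoidHom.mk'
    (fun φ => ⟨φ.1.subtypePerm fun v => by simp only [Set.mem_preimage, φ.2.2 v],
      fun v w => φ.2.1 v w, fun v => φ.2.2 v⟩)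
    (fun _ _ => rfl)

section

variable {T : Set C} [DecidablePred (· ∈ π ⁻¹' T)] {τ : Equiv.Perm (π ⁻¹' T)}

lemma color_ofSubtype (hτ : τ ∈ Aut (G.induce (π ⁻¹' T)) (fun v => π v.1)) (v : V) :
    π (Equiv.Perm.ofSubtype τ v) = π v := by
  by_cases hv : v ∈ π ⁻¹' T
  · rw [Equiv.Perm.ofSubtype_apply_of_mem τ hv]
    exact hτ.2 _
  · rw [Equiv.Perm.ofSubtype_apply_of_not_mem τ hv]

lemma adj_ofSubtype (hτ : τ ∈ Aut (G.induce (π ⁻¹' T)) (fun v => π v.1)) {v w : V}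
    (hv : v ∈ π ⁻¹' T) (hw : w ∈ π ⁻¹' T) (h : G.Adj v w) :
    G.Adj (Equiv.Perm.ofSubtype τ v) (Equiv.Perm.ofSubtype τ w) := by
  rw [Equiv.Perm.ofSubtype_apply_of_mem τ hv, Equiv.Perm.ofSubtype_apply_of_mem τ hw]
  exact (hτ.1 ⟨v, hv⟩ ⟨w, hw⟩).2 h

end

def keptColors (c : ℕ → C) (t : ℕ) : Set C := {d | ∀ i, 1 ≤ i → i ≤ t → d ≠ c i}

/- `ℕ`-indexed partial paths through the classes `c a, …, c b`; unlike `IsUPath` they can be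
extended at either end by `Function.update` without `Fin` casts. -/
variable (G π c) in
def IsChainOn (a b : ℕ) (u : ℕ → V) : Prop :=
  (∀ j, a ≤ j → j ≤ b → π (u j) = c j) ∧ ∀ j, a ≤ j → j < b → G.Adj (u j) (u (j + 1))

lemma IsChainOn.update_succ {a b : ℕ} {u : ℕ → V} {n : V} (hu : IsChainOn G π c a b u)
    (hn : G.Adj (u b) n) (hnc : π n = c (b + 1)) :
    IsChainOn G π c a (b + 1) (Function.update u (b + 1) n) := by
  refine ⟨fun j hja hjb => ?_, fun j hja hjb => ?_⟩
  · rcases (show j ≤ b ∨ j = b + 1 by omega) with hj | rfl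
    · rw [Function.update_of_ne (by omega)]
      exact hu.1 j hja hj
    · simpa using hnc
  · rw [Function.update_of_ne (show j ≠ b + 1 by omega)]
    rcases (show j < b ∨ j = b by omega) with hj | rfl
    · rw [Function.update_of_ne (by omega)]
      exact hu.2 j hja hj
    · simpa using hn

lemma IsChainOn.update_pred {a b : ℕ} {u : ℕ → V} {n : V} (hu : IsChainOn G π c (a + 1) b u)
    (hab : a < b) (hn : G.Adj (u (a + 1)) n) (hnc : π n = c a) :
    IsChainOn G π c a b (Function.update u a n) := by
  refine ⟨fun j hja hjb => ?_, fun j hja hjb => ?_⟩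
  · rcases (show a + 1 ≤ j ∨ j = a by omega) with hj | rfl
    · rw [Function.update_of_ne (by omega)]
      exact hu.1 j hj hjb
    · simpa using hnc
  · rw [Function.update_of_ne (show j + 1 ≠ a by omega)]
    rcases (show a + 1 ≤ j ∨ j = a by omega) with hj | rfl
    · rw [Function.update_of_ne (by omega)]
      exact hu.2 j hj hjb
    · simpa using hn.symm

lemma IsChainOn.isUPath {u : ℕ → V} (hu : IsChainOn G π c 0 (t + 1) u) :
    IsUPath G π c t (u 0) (fun j => u j.1) :=
  ⟨rfl, fun j => hu.1 j (Nat.zero_le _) (by omega), fun j hj => hu.2 j (Nat.zero_le _) (by omega)⟩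

variable (G π c t) in
noncomputable def connectingPath (x y : V) : Fin (t + 2) → V :=
  open Classical in
  if h : ∃ w, IsUPath G π c t x w ∧ w (Fin.last (t + 1)) = y then h.choose else fun _ => x

/- A vertex off `π ⁻¹' keptColors c t` is `w j` for a path `w` from some `x`; it is sent to the
`j`-th vertex of the path from `g x` to `g (w last)`. -/
variable (G π c t) in
noncomputable def liftMap (g : V → V) (v : V) : V :=
  open Classical in
  if h : v ∉ π ⁻¹' keptColors c t ∧ ∃ p : V × (Fin (t + 2) → V) × Fin (t + 2),
      IsUPath G π c t p.1 p.2.1 ∧ p.2.1 p.2.2 = v then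
    connectingPath G π c t (g h.2.choose.1) (g (h.2.choose.2.1 (Fin.last (t + 1))))
      h.2.choose.2.2
  else g v

lemma liftMap_of_mem {g : V → V} {v : V} (hv : v ∈ π ⁻¹' keptColors c t) :
    liftMap G π c t g v = g v := by
  rw [liftMap, dif_neg fun h => h.1 hv]

lemma exists_liftMap_eq_of_not_mem {g : V → V} {v : V} (hv : v ∉ π ⁻¹' keptColors c t)
    (hpath : ∃ p : V × (Fin (t + 2) → V) × Fin (t + 2),
      IsUPath G π c t p.1 p.2.1 ∧ p.2.1 p.2.2 = v) :
    ∃ p : V × (Fin (t + 2) → V) × Fin (t + 2), IsUPath G π c t p.1 p.2.1 ∧ p.2.1 p.2.2 = v ∧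
      liftMap G π c t g v = connectingPath G π c t (g p.1) (g (p.2.1 (Fin.last (t + 1)))) p.2.2 :=
  ⟨_, hpath.choose_spec.1, hpath.choose_spec.2, by rw [liftMap, dif_pos ⟨hv, hpath⟩]⟩

lemma IsUPath.adj {x : V} {w : Fin (t + 2) → V} (hw : IsUPath G π c t x w) {j j' : Fin (t + 2)}
    (h : j.1 + 1 = j'.1 ∨ j'.1 + 1 = j.1) : G.Adj (w j) (w j') := by
  obtain ⟨j, hj⟩ := j
  obtain ⟨j', hj'⟩ := j'
  rcases h with rfl | rfl
  exacts [hw.2.2 j hj', (hw.2.2 j' hj).symm]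

section

variable (hinj : ∀ i j, i ≤ t + 1 → j ≤ t + 1 → c i = c j → i = j)
  (hdeg2 : ∀ i, 1 ≤ i → i ≤ t → ∀ v, π v = c i →
      (G.neighborSet v).ncard = 2 ∧ (∃ u, G.Adj v u ∧ π u = c (i - 1)) ∧
        (∃ u, G.Adj v u ∧ π u = c (i + 1)))
  (hpaths : ∀ x y, π x = c 0 → π y = c (t + 1) →
      ∃! w : Fin (t + 2) → V, IsUPath G π c t x w ∧ w (Fin.last (t + 1)) = y)

include hinj hdeg2 in
lemma neighborSet_eq_pair_of_color {i : ℕ} (hi1 : 1 ≤ i) (hi2 : i ≤ t) {v : V}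
    (hv : π v = c i) :
    ∃ d u, π d = c (i - 1) ∧ π u = c (i + 1) ∧ G.neighborSet v = {d, u} := by
  obtain ⟨h2, ⟨d, hd, hdc⟩, ⟨u, hu, huc⟩⟩ := hdeg2 i hi1 hi2 v hv
  have hdu : d ≠ u := by
    rintro rfl
    have := hinj (i - 1) (i + 1) (by omega) (by omega) (hdc.symm.trans huc)
    omega
  exact ⟨d, u, hdc, huc, Set.eq_pair_of_ncard_eq_two h2 hd hu hdu⟩

include hinj hdeg2 in
lemma eq_of_adj_of_color_eq {i : ℕ} (hi1 : 1 ≤ i) (hi2 : i ≤ t) {v a b : V}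
    (hv : π v = c i) (ha : G.Adj v a) (hb : G.Adj v b) (hab : π a = π b) : a = b := by
  obtain ⟨d, u, hdc, huc, hN⟩ := neighborSet_eq_pair_of_color hinj hdeg2 hi1 hi2 hv
  have hcolors : π d ≠ π u := fun h => by
    have := hinj (i - 1) (i + 1) (by omega) (by omega) (hdc.symm.trans (h.trans huc))
    omega
  replace ha : a ∈ ({d, u} : Set V) := hN ▸ ha
  replace hb : b ∈ ({d, u} : Set V) := hN ▸ hb
  rcases ha with rfl | rfl <;> rcases hb with rfl | rfl
  all_goals first | rfl | exact absurd hab hcolors | exact absurd hab.symm hcolors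

include hinj hdeg2 in
lemma color_of_adj {i : ℕ} (hi1 : 1 ≤ i) (hi2 : i ≤ t) {v a : V} (hv : π v = c i)
    (ha : G.Adj v a) : π a = c (i - 1) ∨ π a = c (i + 1) := by
  obtain ⟨d, u, hdc, huc, hN⟩ := neighborSet_eq_pair_of_color hinj hdeg2 hi1 hi2 hv
  replace ha : a ∈ ({d, u} : Set V) := hN ▸ ha
  rcases ha with rfl | rfl
  exacts [Or.inl hdc, Or.inr huc]

include hinj hdeg2 in
lemma IsUPath.eq_of_adj {x n : V} {w : Fin (t + 2) → V} (hw : IsUPath G π c t x w)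
    {j : Fin (t + 2)} (hj1 : 1 ≤ j.1) (hjt : j.1 ≤ t) (hn : G.Adj (w j) n) :
    ∃ j' : Fin (t + 2), (j.1 + 1 = j'.1 ∨ j'.1 + 1 = j.1) ∧ n = w j' := by
  have hcol (j' : Fin (t + 2)) (hj' : j.1 + 1 = j'.1 ∨ j'.1 + 1 = j.1) (hc : π n = c j') :
      ∃ j' : Fin (t + 2), (j.1 + 1 = j'.1 ∨ j'.1 + 1 = j.1) ∧ n = w j' :=
    ⟨j', hj', eq_of_adj_of_color_eq hinj hdeg2 hj1 hjt (hw.2.1 j) hn (hw.adj hj')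
      (hc.trans (hw.2.1 j').symm)⟩
  rcases color_of_adj hinj hdeg2 hj1 hjt (hw.2.1 j) hn with hc | hc
  exacts [hcol ⟨j - 1, by omega⟩ (by dsimp only; omega) hc,
    hcol ⟨j + 1, by omega⟩ (by dsimp only; omega) hc]

include hinj hdeg2 in
lemma IsUPath.eq_of_apply_eq {x x' : V} {w w' : Fin (t + 2) → V} (hw : IsUPath G π c t x w)
    (hw' : IsUPath G π c t x' w') {i : ℕ} (hi1 : 1 ≤ i) (hit : i ≤ t)
    (h : w ⟨i, by omega⟩ = w' ⟨i, by omega⟩) : w = w' := by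
  have hsucc (k : ℕ) (hk : k + 1 < t + 2) : G.Adj (w ⟨k, by omega⟩) (w ⟨k + 1, hk⟩) :=
    hw.2.2 k hk
  have hsucc' (k : ℕ) (hk : k + 1 < t + 2) : G.Adj (w' ⟨k, by omega⟩) (w' ⟨k + 1, hk⟩) :=
    hw'.2.2 k hk
  have up : ∀ j, i ≤ j → ∀ hj : j < t + 2, w ⟨j, hj⟩ = w' ⟨j, hj⟩ := by
    refine Nat.le_induction (fun _ => h) fun k hik ih hk => ?_
    refine eq_of_adj_of_color_eq hinj hdeg2 (i := k) (by omega) (by omega)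
      (hw.2.1 ⟨k, by omega⟩) (hsucc k hk) ?_ ((hw.2.1 _).trans (hw'.2.1 _).symm)
    rw [ih (by omega)]
    exact hsucc' k hk
  have down : ∀ j, j ≤ i → ∀ hj : j < t + 2, w ⟨j, hj⟩ = w' ⟨j, hj⟩ := by
    refine fun j hj => Nat.decreasingInduction (fun k hki ih hk => ?_) (fun _ => h) hj
    refine eq_of_adj_of_color_eq hinj hdeg2 (i := k + 1) (by omega) (by omega)
      (hw.2.1 ⟨k + 1, by omega⟩) (hsucc k (by omega)).symm ?_ ((hw.2.1 _).trans (hw'.2.1 _).symm)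
    rw [ih (by omega)]
    exact (hsucc' k (by omega)).symm
  funext ⟨j, hj⟩
  rcases le_total i j with hij | hji
  exacts [up j hij hj, down j hji hj]

include hdeg2 in
lemma exists_isUPath_apply_eq {i : ℕ} (hi1 : 1 ≤ i) (hit : i ≤ t) {v : V} (hv : π v = c i) :
    ∃ w : Fin (t + 2) → V, IsUPath G π c t (w ⟨0, by omega⟩) w ∧ w ⟨i, by omega⟩ = v := by
  have up : ∀ b, i ≤ b → b ≤ t + 1 → ∃ u, IsChainOn G π c i b u ∧ u i = v := by
    refine Nat.le_induction (fun _ => ⟨fun _ => v, ⟨fun j hj hj' => ?_, by omega⟩, rfl⟩)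
      fun b hib ih hbt => ?_
    · rwa [show j = i by omega]
    obtain ⟨u, hu, hui⟩ := ih (by omega)
    obtain ⟨-, -, n, hn, hnc⟩ := hdeg2 b (by omega) (by omega) (u b) (hu.1 b hib le_rfl)
    exact ⟨_, hu.update_succ hn hnc, by rwa [Function.update_of_ne (by omega)]⟩
  have down : ∀ a, a ≤ i → ∃ u, IsChainOn G π c a (t + 1) u ∧ u i = v := by
    refine fun a ha =>
      Nat.decreasingInduction (fun k hki ih => ?_) (up (t + 1) (by omega) le_rfl) ha
    obtain ⟨u, hu, hui⟩ := ih
    obtain ⟨-, ⟨n, hn, hnc⟩, -⟩ :=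
      hdeg2 (k + 1) (by omega) (by omega) (u (k + 1)) (hu.1 (k + 1) le_rfl (by omega))
    exact ⟨_, hu.update_pred (by omega) hn hnc, by rwa [Function.update_of_ne (by omega)]⟩
  obtain ⟨u, hu, hui⟩ := down 0 (Nat.zero_le _)
  exact ⟨fun j => u j.1, hu.isUPath, hui⟩

include hinj in
lemma mem_keptColors_iff {v : V} {j : ℕ} (hj : j ≤ t + 1) (hv : π v = c j) :
    v ∈ π ⁻¹' keptColors c t ↔ j = 0 ∨ j = t + 1 := by
  refine ⟨fun h => ?_, fun h i hi1 hit hvi => ?_⟩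
  · by_contra! hj'
    exact h j (by omega) (by omega) hv
  · have := hinj j i hj (by omega) (hv.symm.trans hvi)
    omega

include hdeg2 in
lemma exists_isUPath_of_not_mem {v : V} (hv : v ∉ π ⁻¹' keptColors c t) :
    ∃ (x : V) (w : Fin (t + 2) → V) (j : Fin (t + 2)),
      IsUPath G π c t x w ∧ w j = v ∧ 1 ≤ j.1 ∧ j.1 ≤ t := by
  obtain ⟨i, hi1, hit, hv⟩ : ∃ i, 1 ≤ i ∧ i ≤ t ∧ π v = c i := by
    simpa [keptColors] using hv
  obtain ⟨w, hw, hwi⟩ := exists_isUPath_apply_eq hdeg2 hi1 hit hv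
  exact ⟨_, w, ⟨i, by omega⟩, hw, hwi, hi1, hit⟩

include hpaths in
lemma isUPath_connectingPath {x y : V} (hx : π x = c 0) (hy : π y = c (t + 1)) :
    IsUPath G π c t x (connectingPath G π c t x y) ∧
      connectingPath G π c t x y (Fin.last (t + 1)) = y := by
  rw [connectingPath, dif_pos (hpaths x y hx hy).exists]
  exact (hpaths x y hx hy).exists.choose_spec

include hpaths in
lemma IsUPath.eq_connectingPath {x : V} {w : Fin (t + 2) → V} (hw : IsUPath G π c t x w) :
    w = connectingPath G π c t x (w (Fin.last (t + 1))) := by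
  have hx : π x = c 0 := hw.1 ▸ hw.2.1 _
  have hy := hw.2.1 (Fin.last (t + 1))
  exact (hpaths x _ hx hy).unique ⟨hw, rfl⟩ (isUPath_connectingPath hpaths hx hy)

include hpaths in
lemma IsUPath.isUPath_connectingPath_map {g : V → V} (hg : ∀ v, π (g v) = π v) {x : V}
    {w : Fin (t + 2) → V} (hw : IsUPath G π c t x w) :
    IsUPath G π c t (g x) (connectingPath G π c t (g x) (g (w (Fin.last (t + 1))))) ∧
      connectingPath G π c t (g x) (g (w (Fin.last (t + 1)))) (Fin.last (t + 1)) =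
        g (w (Fin.last (t + 1))) :=
  isUPath_connectingPath hpaths ((hg x).trans (hw.1 ▸ hw.2.1 _)) ((hg _).trans (hw.2.1 _))

include hinj hdeg2 hpaths in
lemma liftMap_apply {g : V → V} (hg : ∀ v, π (g v) = π v) {x : V} {w : Fin (t + 2) → V}
    (hw : IsUPath G π c t x w) (j : Fin (t + 2)) :
    liftMap G π c t g (w j) =
      connectingPath G π c t (g x) (g (w (Fin.last (t + 1)))) j := by
  obtain ⟨hP, hPy⟩ := hw.isUPath_connectingPath_map hpaths hg
  by_cases hS : w j ∈ π ⁻¹' keptColors c t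
  · rw [liftMap_of_mem hS]
    rcases (mem_keptColors_iff hinj (by omega) (hw.2.1 j)).1 hS with h0 | hl
    · rw [show j = ⟨0, by omega⟩ from Fin.ext h0, hw.1, hP.1]
    · rw [show j = Fin.last (t + 1) from Fin.ext hl, hPy]
  obtain ⟨⟨x', w', j'⟩, hw', hj', heq⟩ :=
    exists_liftMap_eq_of_not_mem (g := g) hS ⟨(x, w, j), hw, rfl⟩
  dsimp only at hw' hj' heq
  rw [heq]
  obtain rfl : j = j' :=
    Fin.ext (hinj _ _ (by omega) (by omega) ((hw.2.1 j).symm.trans (hj' ▸ hw'.2.1 j')))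
  have hj := (mem_keptColors_iff hinj (by omega) (hw.2.1 j)).not.1 hS
  obtain rfl : w' = w := hw'.eq_of_apply_eq hinj hdeg2 hw (i := j.1) (by omega) (by omega) hj'
  rw [hw'.1.symm.trans hw.1]

include hinj hdeg2 hpaths in
lemma color_liftMap {g : V → V} (hg : ∀ v, π (g v) = π v) (v : V) :
    π (liftMap G π c t g v) = π v := by
  by_cases hv : v ∈ π ⁻¹' keptColors c t
  · rw [liftMap_of_mem hv, hg]
  obtain ⟨x, w, j, hw, rfl, -⟩ := exists_isUPath_of_not_mem hdeg2 hv
  rw [liftMap_apply hinj hdeg2 hpaths hg hw, (hw.isUPath_connectingPath_map hpaths hg).1.2.1 j,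
    hw.2.1 j]

include hinj hdeg2 hpaths in
lemma liftMap_adj {g : V → V} (hg : ∀ v, π (g v) = π v)
    (hgadj : ∀ v w, v ∈ π ⁻¹' keptColors c t → w ∈ π ⁻¹' keptColors c t →
      G.Adj v w → G.Adj (g v) (g w))
    {v n : V} (h : G.Adj v n) : G.Adj (liftMap G π c t g v) (liftMap G π c t g n) := by
  have off_kept (v n : V) (hv : v ∉ π ⁻¹' keptColors c t) (h : G.Adj v n) :
      G.Adj (liftMap G π c t g v) (liftMap G π c t g n) := by
    obtain ⟨x, w, j, hw, rfl, hj1, hjt⟩ := exists_isUPath_of_not_mem hdeg2 hv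
    obtain ⟨j', hjj', rfl⟩ := hw.eq_of_adj hinj hdeg2 hj1 hjt h
    rw [liftMap_apply hinj hdeg2 hpaths hg hw, liftMap_apply hinj hdeg2 hpaths hg hw]
    exact (hw.isUPath_connectingPath_map hpaths hg).1.adj hjj'
  by_cases hv : v ∈ π ⁻¹' keptColors c t
  · by_cases hn : n ∈ π ⁻¹' keptColors c t
    · rw [liftMap_of_mem hv, liftMap_of_mem hn]
      exact hgadj v n hv hn h
    · exact (off_kept n v hn h.symm).symm
  · exact off_kept v n hv h

include hinj hdeg2 hpaths in
lemma liftMap_liftMap {g g' : V → V} (hg : ∀ v, π (g v) = π v) (hg' : ∀ v, π (g' v) = π v)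
    (v : V) : liftMap G π c t g (liftMap G π c t g' v) = liftMap G π c t (g ∘ g') v := by
  by_cases hv : v ∈ π ⁻¹' keptColors c t
  · have hg'v : g' v ∈ π ⁻¹' keptColors c t := by
      simpa only [Set.mem_preimage, hg'] using hv
    rw [liftMap_of_mem hv, liftMap_of_mem hg'v, liftMap_of_mem hv, Function.comp_apply]
  obtain ⟨x, w, j, hw, rfl, -⟩ := exists_isUPath_of_not_mem hdeg2 hv
  obtain ⟨hP, hPy⟩ := hw.isUPath_connectingPath_map hpaths hg'
  rw [liftMap_apply hinj hdeg2 hpaths hg' hw, liftMap_apply hinj hdeg2 hpaths hg hP, hPy,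
    liftMap_apply hinj hdeg2 hpaths (g := g ∘ g') (fun v => (hg _).trans (hg' v)) hw,
    Function.comp_apply, Function.comp_apply]

include hinj hdeg2 hpaths in
lemma liftMap_id (v : V) : liftMap G π c t id v = v := by
  by_cases hv : v ∈ π ⁻¹' keptColors c t
  · exact liftMap_of_mem hv
  obtain ⟨x, w, j, hw, rfl, -⟩ := exists_isUPath_of_not_mem hdeg2 hv
  rw [liftMap_apply hinj hdeg2 hpaths (g := id) (fun _ => rfl) hw]
  exact congrFun (hw.eq_connectingPath hpaths).symm j

include hinj hdeg2 hpaths in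
theorem restrictAut_surjective : Function.Surjective (restrictAut G π (keptColors c t)) := by
  classical
  rintro ⟨σ, hσ⟩
  have hσ' : σ⁻¹ ∈ Aut (G.induce (π ⁻¹' keptColors c t)) (fun v => π v.1) := inv_mem hσ
  have inverse {τ τ' : Equiv.Perm (π ⁻¹' keptColors c t)}
      (hτ : τ ∈ Aut (G.induce (π ⁻¹' keptColors c t)) (fun v => π v.1))
      (hτ' : τ' ∈ Aut (G.induce (π ⁻¹' keptColors c t)) (fun v => π v.1)) (h : τ * τ' = 1)
      (v : V) :
      liftMap G π c t (Equiv.Perm.ofSubtype τ)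
        (liftMap G π c t (Equiv.Perm.ofSubtype τ') v) = v := by
    rw [liftMap_liftMap hinj hdeg2 hpaths (color_ofSubtype hτ) (color_ofSubtype hτ'),
      ← Equiv.Perm.coe_mul, ← map_mul, h, map_one, Equiv.Perm.coe_one,
      liftMap_id hinj hdeg2 hpaths]
  let φ : Equiv.Perm V :=
    ⟨liftMap G π c t (Equiv.Perm.ofSubtype σ), liftMap G π c t (Equiv.Perm.ofSubtype σ⁻¹),
      inverse hσ' hσ (inv_mul_cancel σ), inverse hσ hσ' (mul_inv_cancel σ)⟩
  have hφ : φ ∈ Aut G π := by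
    refine ⟨fun v w => ⟨fun h => ?_, liftMap_adj hinj hdeg2 hpaths (color_ofSubtype hσ)
      (fun _ _ => adj_ofSubtype hσ)⟩, color_liftMap hinj hdeg2 hpaths (color_ofSubtype hσ)⟩
    simpa only [φ, Equiv.coe_fn_mk, inverse hσ' hσ (inv_mul_cancel σ)] using
      liftMap_adj hinj hdeg2 hpaths (color_ofSubtype hσ') (fun _ _ => adj_ofSubtype hσ') h
  refine ⟨⟨φ, hφ⟩, Subtype.ext (Equiv.ext fun s => Subtype.ext ?_)⟩
  exact (liftMap_of_mem s.2).trans (Equiv.Perm.ofSubtype_apply_of_mem σ s.2)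

end

end Sassy

theorem stmt14_general {V C : Type*} (G : SimpleGraph V) (π : V → C)
    (t : ℕ) (c : ℕ → C)
    (hinj : ∀ i j, i ≤ t + 1 → j ≤ t + 1 → c i = c j → i = j)
    (hdeg2 : ∀ i, 1 ≤ i → i ≤ t → ∀ v, π v = c i →
      (G.neighborSet v).ncard = 2 ∧ (∃ u, G.Adj v u ∧ π u = c (i - 1)) ∧
        (∃ u, G.Adj v u ∧ π u = c (i + 1)))
    (hpaths : ∀ x y, π x = c 0 → π y = c (t + 1) →
      ∃! w : Fin (t + 2) → V,
        Sassy.IsUPath G π c t x w ∧ w (Fin.last (t + 1)) = y) :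
    ∃ p : ↥(Sassy.Aut G π) →*
        ↥(Sassy.Aut (G.induce {v : V | ∀ i, 1 ≤ i → i ≤ t → π v ≠ c i})
          (fun v => π v.1)),
      (∀ (φ : ↥(Sassy.Aut G π)) (v : ↥{v : V | ∀ i, 1 ≤ i → i ≤ t → π v ≠ c i}),
        ((p φ).1 v).1 = φ.1 v.1) ∧
      Function.Surjective p :=
  ⟨Sassy.restrictAut G π (Sassy.keptColors c t), fun _ _ => rfl,
    Sassy.restrictAut_surjective hinj hdeg2 hpaths⟩

/-- Obfuscated edge flip: if the distinct color classes X = c 0 and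
Y = c (t+1) are connected by exactly one internally degree-2 path through
C₁,…,C_t for every pair (x,y) ∈ X × Y, then deleting C₁,…,C_t is symmetry
preserving and symmetry lifting: restriction is a surjective homomorphism
from Aut(G,π) onto the automorphism group of the reduced graph. -/
theorem stmt14 {V C : Type*} [Fintype V] (G : SimpleGraph V) (π : V → C)
    (hequit : Sassy.Equitable G π) (t : ℕ) (c : ℕ → C)
    (hinj : ∀ i j, i ≤ t + 1 → j ≤ t + 1 → c i = c j → i = j)
    (hdeg2 : ∀ i, 1 ≤ i → i ≤ t → ∀ v, π v = c i →
      (G.neighborSet v).ncard = 2 ∧ (∃ u, G.Adj v u ∧ π u = c (i - 1)) ∧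
        (∃ u, G.Adj v u ∧ π u = c (i + 1)))
    (hpaths : ∀ x y, π x = c 0 → π y = c (t + 1) →
      ∃! w : Fin (t + 2) → V,
        Sassy.IsUPath G π c t x w ∧ w (Fin.last (t + 1)) = y) :
    ∃ p : ↥(Sassy.Aut G π) →*
        ↥(Sassy.Aut (G.induce {v : V | ∀ i, 1 ≤ i → i ≤ t → π v ≠ c i})
          (fun v => π v.1)),
      (∀ (φ : ↥(Sassy.Aut G π)) (v : ↥{v : V | ∀ i, 1 ≤ i → i ≤ t → π v ≠ c i}),
        ((p φ).1 v).1 = φ.1 v.1) ∧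
      Function.Surjective p :=
  stmt14_general G π t c hinj hdeg2 hpaths
end
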